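/- arXiv:2004.14097 — 2 statements merged into one kernel-verified Lean document; each statement's English description precedes it below -/
import Mathlib

section
/- Let n ≥ 1, let K ⊆ ℝ^n be an unconditional convex body and let m ∈ ℕ, m ≥ 1. Then #(m K) ≤ (2m - 1)^n · #(K). Moreover the inequality is sharp: for K = [-(1 - 1/(2m)), 1 - 1/(2m)]^n one has #(m K) = (2m - 1)^n · #(K). -/
open scoped BigOperators Pointwise

/-- The lattice point enumerator: the number of integer points in `A ⊆ ℝ^n`. -/
noncomputable def latCount {n : ℕ} (A : Set (Fin n → ℝ)) : ℕ :=
  (A ∩ {x : Fin n → ℝ | ∀ i, ∃ z : ℤ, x i = (z : ℝ)}).ncard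

/-- `K` is unconditional: closed under sign changes of the coordinates. -/
def Unconditional {n : ℕ} (K : Set (Fin n → ℝ)) : Prop :=
  ∀ x ∈ K, ∀ ε : Fin n → ℝ, (∀ i, ε i = 1 ∨ ε i = -1) → (fun i => ε i * x i) ∈ K

/-!
Write a lattice point `z` of `m K` coordinatewise as `z = (2m - 1) q + r` with balanced remainder
`|rᵢ| ≤ m - 1`. Then `m |qᵢ| ≤ |zᵢ|`, so `q` is coordinatewise dominated in absolute value by the
point `z / m` of `K`; an unconditional convex body contains every such point, hence `q ∈ K`. Thus
`z ↦ (q, r)` embeds `mK ∩ ℤⁿ` into `(K ∩ ℤⁿ) × {1 - m, …, m - 1}ⁿ`.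
For the cube of half-width `1 - 1/(2m)` the only lattice point is `0`, while its dilate, of
half-width `m - 1/2`, contains all `(2m - 1)ⁿ` points of that box.
-/

open Metric

namespace Int

theorem abs_bmod_two_mul_sub_one_le (z : ℤ) {m : ℕ} (hm : 1 ≤ m) :
    |z.bmod (2 * m - 1)| ≤ ((m - 1 : ℕ) : ℤ) := by
  have hlt := bmod_lt (x := z) (m := 2 * m - 1) (by omega)
  have hle := le_bmod (x := z) (m := 2 * m - 1) (by omega)
  rw [abs_le]
  omega

theorem mul_abs_bdiv_two_mul_sub_one_le (z : ℤ) {m : ℕ} (hm : 1 ≤ m) :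
    m * |z.bdiv (2 * m - 1)| ≤ |z| := by
  have hr := abs_bmod_two_mul_sub_one_le z hm
  have hz := (bdiv_add_bmod z (2 * m - 1)).symm
  set q := z.bdiv (2 * m - 1)
  set r := z.bmod (2 * m - 1)
  have hM : ((2 * m - 1 : ℕ) : ℤ) = 2 * m - 1 := by omega
  have hm1 : ((m - 1 : ℕ) : ℤ) = m - 1 := by omega
  rw [hM] at hz
  rw [hm1] at hr
  -- |z| ≥ (2m-1)|q| - |r| ≥ (2m-1)|q| - (m-1), and (m-1)|q| ≥ m-1 unless q = 0
  rcases eq_or_ne q 0 with hq | hq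
  · simp [hq]
  · have h1 : 1 ≤ |q| := one_le_abs hq
    have h2 : |(2 * (m : ℤ) - 1) * q| - |r| ≤ |z| := by
      rw [hz]; exact abs_sub_abs_le_abs_add _ _
    rw [abs_mul, abs_of_pos (by omega : (0:ℤ) < 2 * m - 1)] at h2
    nlinarith

end Int

namespace Unconditional

variable {n : ℕ} {K : Set (Fin n → ℝ)}

theorem update_mem (hK : Unconditional K) (hconv : Convex ℝ K) {x : Fin n → ℝ} (hx : x ∈ K)
    (i : Fin n) {t : ℝ} (ht : |t| ≤ |x i|) : Function.update x i t ∈ K := by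
  have hflip : Function.update x i (-x i) ∈ K := by
    convert hK x hx (Function.update 1 i (-1)) (fun j => by
      rcases eq_or_ne j i with rfl | hj <;> simp [*]) using 1
    ext j
    rcases eq_or_ne j i with rfl | hj <;> simp [*]
  have ht' : t ∈ segment ℝ (x i) (-x i) := by
    rw [segment_eq_uIcc, Set.mem_uIcc]
    rcases le_total 0 (x i) with h | h
    · rw [abs_of_nonneg h] at ht; exact Or.inr (abs_le.mp ht)
    · rw [abs_of_nonpos h] at ht; exact Or.inl (by simpa using abs_le.mp ht)
  obtain ⟨a, b, ha, hb, hab, rfl⟩ := ht'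
  convert hconv hx hflip ha hb hab using 1
  ext j
  rcases eq_or_ne j i with rfl | hj
  · simp
  · simp [hj, ← add_mul, hab]

theorem mem_of_abs_le (hK : Unconditional K) (hconv : Convex ℝ K) {x y : Fin n → ℝ} (hx : x ∈ K)
    (hy : ∀ i, |y i| ≤ |x i|) : y ∈ K := by
  suffices ∀ s : Finset (Fin n), ∀ y : Fin n → ℝ, (∀ i, |y i| ≤ |x i|) → (∀ i ∉ s, y i = x i) →
      y ∈ K from this Finset.univ y hy (by simp)
  intro s
  induction s using Finset.induction_on with
  | empty => exact fun y _ hxy => (funext fun i => hxy i (Finset.notMem_empty i)) ▸ hx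
  | insert i s hi ih =>
    intro y hy hxy
    have hy' : Function.update y i (x i) ∈ K := by
      refine ih _ (fun j => ?_) (fun j hj => ?_)
      · rcases eq_or_ne j i with rfl | hji <;> simp [*]
      · rcases eq_or_ne j i with rfl | hji
        · simp
        · simpa [hji] using hxy j (by simp [hji, hj])
    simpa using update_mem hK hconv hy' i (t := y i) (by simpa using hy i)

end Unconditional

section LatticePoints

variable {ι : Type*}

def latticePoints (A : Set (ι → ℝ)) : Set (ι → ℤ) := {z | (fun i => (z i : ℝ)) ∈ A}

theorem latCount_eq_ncard_latticePoints {n : ℕ} (A : Set (Fin n → ℝ)) :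
    latCount A = (latticePoints A).ncard := by
  have hinj : Function.Injective fun (z : Fin n → ℤ) (i : Fin n) => (z i : ℝ) :=
    fun a b h => funext fun i => by simpa using congrFun h i
  rw [latCount, ← Set.ncard_preimage_of_injective_subset_range hinj]
  · congr 1
    ext z
    exact and_iff_left fun i => ⟨z i, rfl⟩
  · rintro x ⟨-, hx⟩
    choose z hz using hx
    exact ⟨z, funext fun i => (hz i).symm⟩

variable [Fintype ι]

theorem abs_le_eq_coe_piFinset [DecidableEq ι] (N : ℕ) :
    {z : ι → ℤ | ∀ i, |z i| ≤ N} = ↑(Fintype.piFinset fun _ : ι => Finset.Icc (-(N : ℤ)) N) := by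
  ext z
  simp only [Set.mem_ofPred_eq, Finset.mem_coe, Fintype.mem_piFinset, Finset.mem_Icc, abs_le]

theorem ncard_abs_le (N : ℕ) :
    {z : ι → ℤ | ∀ i, |z i| ≤ N}.ncard = (2 * N + 1) ^ Fintype.card ι := by
  classical
  rw [abs_le_eq_coe_piFinset, Set.ncard_coe_finset, Fintype.card_piFinset, Finset.prod_const,
    Int.card_Icc, Finset.card_univ]
  congr
  omega

theorem finite_abs_le (N : ℕ) : {z : ι → ℤ | ∀ i, |z i| ≤ N}.Finite := by
  classical
  rw [abs_le_eq_coe_piFinset]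
  exact Finset.finite_toSet _

theorem setOf_abs_le_eq_closedBall {c : ℝ} (hc : 0 ≤ c) :
    {x : ι → ℝ | ∀ i, |x i| ≤ c} = closedBall 0 c := by
  ext x
  simp [pi_norm_le_iff_of_nonneg hc]

theorem latticePoints_closedBall_zero {c : ℝ} (hc : 0 ≤ c) :
    latticePoints (closedBall (0 : ι → ℝ) c) = {z | ∀ i, |z i| ≤ (⌊c⌋₊ : ℤ)} := by
  ext z
  simp only [latticePoints, mem_closedBall_zero_iff, pi_norm_le_iff_of_nonneg hc,
    Real.norm_eq_abs]
  refine forall_congr' fun i => ?_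
  rw [Int.natCast_floor_eq_floor hc, Int.le_floor, Int.cast_abs]

theorem latticePoints_finite {A : Set (ι → ℝ)} (hA : Bornology.IsBounded A) :
    (latticePoints A).Finite := by
  obtain ⟨c, hc, hAc⟩ := hA.subset_closedBall_lt 0 0
  refine (finite_abs_le ⌊c⌋₊).subset ?_
  rw [← latticePoints_closedBall_zero hc.le]
  exact fun z hz => hAc hz

theorem latCount_closedBall_zero {n : ℕ} {c : ℝ} (hc : 0 ≤ c) :
    latCount (closedBall (0 : Fin n → ℝ) c) = (2 * ⌊c⌋₊ + 1) ^ n := by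
  rw [latCount_eq_ncard_latticePoints, latticePoints_closedBall_zero hc, ncard_abs_le,
    Fintype.card_fin]

end LatticePoints

theorem bdiv_mem_latticePoints_of_mem_smul {n : ℕ} {K : Set (Fin n → ℝ)} (hK : Unconditional K)
    (hconv : Convex ℝ K) {m : ℕ} (hm : 1 ≤ m) {z : Fin n → ℤ}
    (hz : z ∈ latticePoints ((m : ℝ) • K)) :
    (fun i => (z i).bdiv (2 * m - 1)) ∈ latticePoints K := by
  obtain ⟨k, hk, hkz⟩ := Set.mem_smul_set.mp hz
  refine hK.mem_of_abs_le hconv hk fun i => ?_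
  have hm0 : (0 : ℝ) < m := by exact_mod_cast hm
  have hzi : (z i : ℝ) = m * k i := (congrFun hkz i).symm
  have h : (m : ℝ) * |((z i).bdiv (2 * m - 1) : ℝ)| ≤ |(z i : ℝ)| := by
    exact_mod_cast Int.mul_abs_bdiv_two_mul_sub_one_le (z i) hm
  rw [hzi, abs_mul, abs_of_pos hm0] at h
  exact le_of_mul_le_mul_left h hm0

theorem latCount_natCast_smul_le {n : ℕ} {K : Set (Fin n → ℝ)} (hK : Unconditional K)
    (hconv : Convex ℝ K) (hbdd : Bornology.IsBounded K) {m : ℕ} (hm : 1 ≤ m) :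
    latCount ((m : ℝ) • K) ≤ (2 * m - 1) ^ n * latCount K := by
  let split (z : Fin n → ℤ) : (Fin n → ℤ) × (Fin n → ℤ) :=
    (fun i => (z i).bdiv (2 * m - 1), fun i => (z i).bmod (2 * m - 1))
  have hsplit_inj : Function.Injective split := fun a b h => funext fun i => by
    rw [← Int.bdiv_add_bmod (a i), ← Int.bdiv_add_bmod (b i)]
    simp only [split, Prod.ext_iff, funext_iff] at h
    rw [h.1 i, h.2 i]
  have hsplit_mem : ∀ z ∈ latticePoints ((m : ℝ) • K),
      split z ∈ latticePoints K ×ˢ {r : Fin n → ℤ | ∀ i, |r i| ≤ (m - 1 : ℕ)} :=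
    fun z hz => ⟨bdiv_mem_latticePoints_of_mem_smul hK hconv hm hz,
      fun i => Int.abs_bmod_two_mul_sub_one_le (z i) hm⟩
  rw [latCount_eq_ncard_latticePoints, latCount_eq_ncard_latticePoints]
  calc (latticePoints ((m : ℝ) • K)).ncard
      ≤ (latticePoints K ×ˢ {r : Fin n → ℤ | ∀ i, |r i| ≤ (m - 1 : ℕ)}).ncard :=
        Set.ncard_le_ncard_of_injOn split hsplit_mem hsplit_inj.injOn
          ((latticePoints_finite hbdd).prod (finite_abs_le _))
    _ = (2 * m - 1) ^ n * (latticePoints K).ncard := by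
        rw [Set.ncard_prod, ncard_abs_le, Fintype.card_fin, mul_comm]
        congr 3
        omega

theorem latCount_dilate_unconditional_general (n : ℕ) (K : Set (Fin n → ℝ))
    (hconv : Convex ℝ K) (hcomp : IsCompact K)
    (huncond : Unconditional K) (m : ℕ) (hm : 1 ≤ m) :
    latCount ((m : ℝ) • K) ≤ (2 * m - 1) ^ n * latCount K ∧
    latCount ((m : ℝ) • {x : Fin n → ℝ | ∀ i, |x i| ≤ 1 - 1 / (2 * (m : ℝ))}) =
      (2 * m - 1) ^ n * latCount {x : Fin n → ℝ | ∀ i, |x i| ≤ 1 - 1 / (2 * (m : ℝ))} := by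
  refine ⟨latCount_natCast_smul_le huncond hconv hcomp.isBounded hm, ?_⟩
  have hm' : (1 : ℝ) ≤ m := by exact_mod_cast hm
  have hc : 0 ≤ 1 - 1 / (2 * (m : ℝ)) := by
    rw [sub_nonneg, div_le_one (by positivity)]; linarith
  have hfloor : ⌊1 - 1 / (2 * (m : ℝ))⌋₊ = 0 :=
    Nat.floor_eq_zero.mpr (sub_lt_self 1 (by positivity))
  have hfloor_smul : ⌊‖(m : ℝ)‖ * (1 - 1 / (2 * (m : ℝ)))⌋₊ = m - 1 := by
    rw [Real.norm_natCast, Nat.floor_eq_iff (by positivity)]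
    field_simp
    constructor <;> push_cast [Nat.cast_sub hm] <;> linarith
  rw [setOf_abs_le_eq_closedBall hc, smul_closedBall _ _ hc, smul_zero,
    latCount_closedBall_zero hc, latCount_closedBall_zero (by positivity), hfloor, hfloor_smul,
    mul_zero, zero_add, one_pow, mul_one]
  congr 1
  omega

/-- Sharp dilation bound for unconditional convex bodies:
`#(mK) ≤ (2m-1)^n #(K)`, with equality for the cube
`K = [-(1 - 1/(2m)), 1 - 1/(2m)]^n`. -/
theorem latCount_dilate_unconditional (n : ℕ) (hn : 1 ≤ n) (K : Set (Fin n → ℝ))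
    (hconv : Convex ℝ K) (hcomp : IsCompact K) (hne : K.Nonempty)
    (huncond : Unconditional K) (m : ℕ) (hm : 1 ≤ m) :
    latCount ((m : ℝ) • K) ≤ (2 * m - 1) ^ n * latCount K ∧
    latCount ((m : ℝ) • {x : Fin n → ℝ | ∀ i, |x i| ≤ 1 - 1 / (2 * (m : ℝ))}) =
      (2 * m - 1) ^ n * latCount {x : Fin n → ℝ | ∀ i, |x i| ≤ 1 - 1 / (2 * (m : ℝ))} :=
  latCount_dilate_unconditional_general n K hconv hcomp huncond m hm
end

section
/- Let n ≥ 1 and let K ⊆ ℝ^n be an unconditional convex body. Then 3^{n(n-1)} · #(K)^{n-1} ≥ ∏_{i=1}^n #(K ∩ e_i^⊥); equivalently, #(K)^{(n-1)/n} ≥ 3^{-(n-1)} (∏_{i=1}^n #(K ∩ e_i^⊥))^{1/n}. -/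
open scoped BigOperators

/-!
Let `S` be the set of integer points of `K` and `R i` the largest `|z i|` over `z ∈ S`; by
unconditionality and convexity `R i • eᵢ ∈ S`, and every integer point dominated coordinatewise by
the midpoint of two points of `S` lies in `S`. For `z` in the section `Sᵢ = S ∩ eᵢ^⊥` and
`2 |t| ≤ R i`, halving the coordinates of `z` (rounding toward zero) and putting `t` in coordinate `i`
gives a point dominated by the midpoint of `z` and `R i • eᵢ`. As `z` is recovered from this point
and its remainders mod 2, `(2 R i + 1) #Sᵢ ≤ 3^n #S`. Since `Sᵢ` also lies in the box
`∏_{j ≠ i} [-R j, R j]`, `(2 R i + 1) #Sᵢ ≤ B := ∏ⱼ (2 R j + 1)`. Multiplying over `i` gives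
`B P ≤ B^n` and `B P ≤ (3^n #S)^n` for `P = ∏ᵢ #Sᵢ`, and eliminating `B` yields
`P ≤ (3^n #S)^(n-1)`.
-/

open Finset Function Topology

theorem Nat.le_pow_of_le_pow_of_mul_le_pow_succ {a b c m : ℕ} (h₁ : a ≤ b ^ m)
    (h₂ : b * a ≤ c ^ (m + 1)) : a ≤ c ^ m := by
  rcases Nat.eq_zero_or_pos b with rfl | hb
  · rcases m with _ | m <;> simp_all
  have hpow : a ^ (m + 1) * b ^ m ≤ (c ^ m) ^ (m + 1) * b ^ m :=
    calc a ^ (m + 1) * b ^ m = (b * a) ^ m * a := by ring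
      _ ≤ (c ^ (m + 1)) ^ m * b ^ m := by gcongr
      _ = (c ^ m) ^ (m + 1) * b ^ m := by ring
  exact (Nat.pow_le_pow_iff_left m.succ_ne_zero).1 (Nat.le_of_mul_le_mul_right hpow (by positivity))

theorem Int.two_mul_abs_tdiv_two_le (a : ℤ) : 2 * |a.tdiv 2| ≤ |a| := by
  have : (a.tdiv 2).natAbs = a.natAbs / 2 := Int.natAbs_tdiv a 2
  rw [Int.abs_eq_natAbs, Int.abs_eq_natAbs, this]
  omega

theorem Finset.card_mul_card_section_le_prod {ι : Type*} [Fintype ι] [DecidableEq ι]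
    (S : Finset (ι → ℤ)) (R : ι → ℕ) (hR : ∀ z ∈ S, ∀ j, (z j).natAbs ≤ R j) (i : ι) :
    (2 * R i + 1) * #{z ∈ S | z i = 0} ≤ ∏ j, (2 * R j + 1) := by
  rw [Fintype.prod_eq_mul_prod_subtype_ne _ i]
  refine Nat.mul_le_mul_left _ ?_
  calc #{z ∈ S | z i = 0}
      ≤ #(Fintype.piFinset fun j : {j // j ≠ i} => Icc (-(R j : ℤ)) (R j)) := by
        refine card_le_card_of_injOn (fun z j => z j) (fun z hz => ?_) (fun z hz z' hz' heq => ?_)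
        · simp only [mem_coe, mem_filter] at hz
          refine Fintype.mem_piFinset.2 fun j => mem_Icc.2 ?_
          have := hR z hz.1 j
          dsimp only
          omega
        · simp only [mem_coe, mem_filter] at hz hz'
          funext j
          rcases eq_or_ne j i with rfl | hj
          · rw [hz.2, hz'.2]
          · exact congrFun heq ⟨j, hj⟩
    _ = ∏ j : {j // j ≠ i}, (2 * R j + 1) := by
        rw [Fintype.card_piFinset]
        exact prod_congr rfl fun j _ => by rw [Int.card_Icc]; omega

def MidpointSolid {ι : Type*} (S : Set (ι → ℤ)) : Prop :=
  ∀ z ∈ S, ∀ w ∈ S, ∀ y : ι → ℤ, (∀ j, 2 * |y j| ≤ |z j + w j|) → y ∈ S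

namespace MidpointSolid

variable {ι : Type*}

theorem mem_of_abs_le {S : Set (ι → ℤ)} (hS : MidpointSolid S) {w y : ι → ℤ} (hw : w ∈ S)
    (hy : ∀ j, |y j| ≤ |w j|) : y ∈ S :=
  hS w hw w hw y fun j => by rw [← two_mul, abs_mul, abs_two]; linarith [hy j]

variable [DecidableEq ι] {S : Finset (ι → ℤ)}

theorem update_tdiv_mem (hS : MidpointSolid (S : Set (ι → ℤ))) {z : ι → ℤ} (hz : z ∈ S) {i : ι}
    (hzi : z i = 0) {r : ℤ} (hr : Pi.single i r ∈ S) {t : ℤ} (ht : 2 * |t| ≤ |r|) :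
    update (fun j => (z j).tdiv 2) i t ∈ S := by
  refine hS z hz _ hr _ fun j => ?_
  rcases eq_or_ne j i with rfl | hj
  · simpa [hzi] using ht
  · simpa [hj] using (z j).two_mul_abs_tdiv_two_le

variable [Fintype ι]

theorem card_mul_card_section_le (hS : MidpointSolid (S : Set (ι → ℤ))) {i : ι} {r : ℤ}
    (hr : Pi.single i r ∈ S) {k : ℕ} (hk : 2 * k ≤ |r|) :
    (2 * k + 1) * #{z ∈ S | z i = 0} ≤ 3 ^ (Fintype.card ι - 1) * #S := by
  let T : Finset ℤ := Icc (-k) k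
  let D : Finset ({j // j ≠ i} → ℤ) := Fintype.piFinset fun _ => Icc (-1) 1
  have hT : #T = 2 * k + 1 := by simp only [T, Int.card_Icc]; omega
  have hD : #D = 3 ^ (Fintype.card ι - 1) := by
    simp [D, Fintype.card_piFinset, Fintype.card_subtype_compl]
  -- `z` is recovered from the halves and the remainders mod 2 of its coordinates
  let f (p : (ι → ℤ) × ℤ) : (ι → ℤ) × ({j // j ≠ i} → ℤ) :=
    (update (fun j => (p.1 j).tdiv 2) i p.2, fun j => (p.1 j).tmod 2)
  calc (2 * k + 1) * #{z ∈ S | z i = 0} = #({z ∈ S | z i = 0} ×ˢ T) := by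
        rw [card_product, hT, mul_comm]
    _ ≤ #(S ×ˢ D) := card_le_card_of_injOn f ?maps ?inj
    _ = 3 ^ (Fintype.card ι - 1) * #S := by rw [card_product, hD, mul_comm]
  case maps =>
    rintro ⟨z, t⟩ hzt
    simp only [mem_coe, mem_product, mem_filter, mem_Icc, T] at hzt
    obtain ⟨⟨hz, hzi⟩, ht⟩ := hzt
    refine mem_product.2 ⟨hS.update_tdiv_mem hz hzi hr ?_, Fintype.mem_piFinset.2 fun j => ?_⟩
    · linarith [abs_le.2 ht]
    · have := Int.tmod_two_eq (z j)
      simp only [f, mem_Icc]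
      omega
  case inj =>
    rintro ⟨z, t⟩ hzt ⟨z', t'⟩ hzt' heq
    simp only [mem_coe, mem_product, mem_filter] at hzt hzt'
    simp only [f, Prod.mk.injEq] at heq
    have htt' : t = t' := by simpa using congrFun heq.1 i
    refine Prod.ext (funext fun j => ?_) htt'
    change z j = z' j
    rcases eq_or_ne j i with rfl | hj
    · rw [hzt.1.2, hzt'.1.2]
    · have hdiv : (z j).tdiv 2 = (z' j).tdiv 2 := by simpa [hj] using congrFun heq.1 j
      have hmod : (z j).tmod 2 = (z' j).tmod 2 := congrFun heq.2 ⟨j, hj⟩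
      rw [← Int.mul_tdiv_add_tmod (z j) 2, ← Int.mul_tdiv_add_tmod (z' j) 2, hdiv, hmod]

theorem card_mul_card_section_le_of_sup (hS : MidpointSolid (S : Set (ι → ℤ))) (i : ι) :
    (2 * S.sup (fun z => (z i).natAbs) + 1) * #{z ∈ S | z i = 0} ≤ 3 ^ Fintype.card ι * #S := by
  obtain hempty | ⟨z, hz⟩ := ({z ∈ S | z i = 0} : Finset (ι → ℤ)).eq_empty_or_nonempty
  · simp [hempty]
  obtain ⟨w, hw, hwR⟩ := S.exists_mem_eq_sup ⟨z, (mem_filter.1 hz).1⟩ fun z => (z i).natAbs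
  set R := S.sup fun z => (z i).natAbs
  have hsingle : Pi.single i (w i) ∈ S :=
    hS.mem_of_abs_le hw fun j => by rcases eq_or_ne j i with rfl | hj <;> simp [*]
  have hhalf := hS.card_mul_card_section_le hsingle (k := R / 2)
    (by rw [hwR, Int.abs_eq_natAbs]; omega)
  calc (2 * R + 1) * #{z ∈ S | z i = 0}
      ≤ 3 * ((2 * (R / 2) + 1) * #{z ∈ S | z i = 0}) := by rw [← mul_assoc]; gcongr; omega
    _ ≤ 3 * (3 ^ (Fintype.card ι - 1) * #S) := by gcongr
    _ = 3 ^ Fintype.card ι * #S := by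
      rw [← mul_assoc, ← pow_succ', Nat.sub_add_cancel (Fintype.card_pos_iff.2 ⟨i⟩)]

theorem prod_card_section_le (hS : MidpointSolid (S : Set (ι → ℤ))) :
    ∏ i, #{z ∈ S | z i = 0} ≤
      3 ^ (Fintype.card ι * (Fintype.card ι - 1)) * #S ^ (Fintype.card ι - 1) := by
  rcases hcard : Fintype.card ι with _ | m
  · have : IsEmpty ι := Fintype.card_eq_zero_iff.1 hcard
    simp
  set R : ι → ℕ := fun i => S.sup fun z => (z i).natAbs
  set B := ∏ i, (2 * R i + 1)
  have hbox : B * ∏ i, #{z ∈ S | z i = 0} ≤ B ^ (m + 1) := by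
    rw [← prod_mul_distrib, ← hcard, ← card_univ, ← prod_const]
    exact prod_le_prod' fun i _ =>
      S.card_mul_card_section_le_prod R (fun z hz j => le_sup (f := fun z => (z j).natAbs) hz) i
  have hmeyer : B * ∏ i, #{z ∈ S | z i = 0} ≤ (3 ^ (m + 1) * #S) ^ (m + 1) := by
    rw [← prod_mul_distrib, ← hcard, ← card_univ, ← prod_const]
    exact prod_le_prod' fun i _ => hS.card_mul_card_section_le_of_sup i
  have hB : 0 < B := prod_pos fun i _ => Nat.succ_pos _
  rw [Nat.add_sub_cancel, pow_mul, ← mul_pow]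
  exact Nat.le_pow_of_le_pow_of_mul_le_pow_succ
    (Nat.le_of_mul_le_mul_left (by rwa [pow_succ'] at hbox) hB) hmeyer

end MidpointSolid

section Unconditional

variable {n : ℕ} {K : Set (Fin n → ℝ)}

theorem Unconditional.update_mem_s16 (huncond : Unconditional K) (hconv : Convex ℝ K)
    {x : Fin n → ℝ} (hx : x ∈ K) (j : Fin n) {c : ℝ} (hc : |c| ≤ |x j|) : update x j c ∈ K := by
  have hline : Convex ℝ {t : ℝ | update x j t ∈ K} := by
    intro a ha b hb θ φ hθ hφ hθφ
    show update x j _ ∈ K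
    convert hconv ha hb hθ hφ hθφ using 1
    ext k
    rcases eq_or_ne k j with rfl | hk
    · simp
    · simp [update_of_ne hk, ← add_mul, hθφ]
  have hflip : update x j (-x j) ∈ K := by
    convert huncond x hx (update 1 j (-1)) fun k => ?_ using 1
    · ext k
      rcases eq_or_ne k j with rfl | hk <;> simp [update_of_ne, *]
    · rcases eq_or_ne k j with rfl | hk <;> simp [update_of_ne, *]
  have hseg := hline.segment_subset hflip (show update x j (x j) ∈ K by simpa using hx)
  rw [segment_eq_uIcc] at hseg
  apply hseg
  rcases abs_le.1 hc with ⟨h₁, h₂⟩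
  rcases le_total 0 (x j) with h | h
  · rw [abs_of_nonneg h] at h₁ h₂
    exact Set.mem_uIcc.2 (.inl ⟨h₁, h₂⟩)
  · rw [abs_of_nonpos h] at h₁ h₂
    exact Set.mem_uIcc.2 (.inr ⟨by linarith, by linarith⟩)

theorem Unconditional.mem_of_abs_le_s16 (huncond : Unconditional K) (hconv : Convex ℝ K)
    {x y : Fin n → ℝ} (hx : x ∈ K) (hy : ∀ j, |y j| ≤ |x j|) : y ∈ K := by
  classical
  have hpiecewise (s : Finset (Fin n)) : s.piecewise y x ∈ K := by
    induction s using Finset.induction_on with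
    | empty => simpa
    | insert j s hj ih =>
      rw [piecewise_insert]
      exact huncond.update_mem_s16 hconv ih j (by rw [piecewise_eq_of_notMem _ _ _ hj]; exact hy j)
  simpa using hpiecewise univ

def intPoints (A : Set (Fin n → ℝ)) : Set (Fin n → ℤ) :=
  {z | (fun i => (z i : ℝ)) ∈ A}

theorem latCount_eq_ncard_intPoints (A : Set (Fin n → ℝ)) :
    latCount A = (intPoints A).ncard := by
  have himage : A ∩ {x : Fin n → ℝ | ∀ i, ∃ z : ℤ, x i = (z : ℝ)} =
      (fun (z : Fin n → ℤ) i => (z i : ℝ)) '' intPoints A := by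
    ext x
    constructor
    · rintro ⟨hA, hx⟩
      choose z hz using hx
      obtain rfl : x = fun i => (z i : ℝ) := funext hz
      exact ⟨z, hA, rfl⟩
    · rintro ⟨z, hz, rfl⟩
      exact ⟨hz, fun i => ⟨z i, rfl⟩⟩
  rw [latCount, himage, Set.ncard_image_of_injective]
  exact fun z z' h => funext fun i => Int.cast_injective (congrFun h i)

theorem IsCompact.finite_intPoints (hK : IsCompact K) : (intPoints K).Finite :=
  ((IsClosedEmbedding.piMap fun _ => Int.isClosedEmbedding_coe_real).isCompact_preimage
    hK).finite_of_discrete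

theorem Unconditional.midpointSolid_intPoints (huncond : Unconditional K) (hconv : Convex ℝ K) :
    MidpointSolid (intPoints K) := by
  intro z hz w hw y hy
  have hmid := hconv hz hw (by norm_num : (0 : ℝ) ≤ 1 / 2) (by norm_num : (0 : ℝ) ≤ 1 / 2)
    (by norm_num)
  refine huncond.mem_of_abs_le_s16 hconv hmid fun j => ?_
  have hyj : 2 * |(y j : ℝ)| ≤ |(z j : ℝ) + w j| := by exact_mod_cast hy j
  simp only [Pi.add_apply, Pi.smul_apply, smul_eq_mul, ← mul_add, abs_mul]
  rw [abs_of_pos (by norm_num : (0 : ℝ) < 1 / 2)]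
  linarith

end Unconditional

theorem discrete_meyer_unconditional_general (n : ℕ) (K : Set (Fin n → ℝ))
    (hconv : Convex ℝ K) (hcomp : IsCompact K)
    (huncond : Unconditional K) :
    ∏ i : Fin n, latCount (K ∩ {x : Fin n → ℝ | x i = 0}) ≤
      3 ^ (n * (n - 1)) * latCount K ^ (n - 1) := by
  set S := hcomp.finite_intPoints.toFinset
  have hS : (S : Set (Fin n → ℤ)) = intPoints K := Set.Finite.coe_toFinset _
  have hsection (i : Fin n) : latCount (K ∩ {x | x i = 0}) = #{z ∈ S | z i = 0} := by
    rw [latCount_eq_ncard_intPoints, ← Set.ncard_coe_finset]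
    congr 1
    ext z
    simp [S, intPoints]
  have hK : latCount K = #S := by rw [latCount_eq_ncard_intPoints, ← Set.ncard_coe_finset, hS]
  have hsolid : MidpointSolid (S : Set (Fin n → ℤ)) := hS ▸ huncond.midpointSolid_intPoints hconv
  simpa only [hsection, hK, Fintype.card_fin] using hsolid.prod_card_section_le

/-- Discrete Meyer inequality for unconditional convex bodies:
`#(K)^{(n-1)/n} ≥ 3^{-(n-1)} (∏ᵢ #(K ∩ eᵢ^⊥))^{1/n}`, i.e.
`3^{n(n-1)} #(K)^{n-1} ≥ ∏ᵢ #(K ∩ eᵢ^⊥)`. -/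
theorem discrete_meyer_unconditional (n : ℕ) (hn : 1 ≤ n) (K : Set (Fin n → ℝ))
    (hconv : Convex ℝ K) (hcomp : IsCompact K) (hne : K.Nonempty)
    (huncond : Unconditional K) :
    ∏ i : Fin n, latCount (K ∩ {x : Fin n → ℝ | x i = 0}) ≤
      3 ^ (n * (n - 1)) * latCount K ^ (n - 1) :=
  discrete_meyer_unconditional_general n K hconv hcomp huncond
end
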